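/- Let S be a numerical semigroup on a compound sequence. Then the catenary degree of S equals max{b_1, b_2, ..., b_p}. -/
import Mathlib

open Finset

theorem sum_upd (s : Finset ℕ) (n f : ℕ → ℕ) (k v : ℕ) (hk : k ∈ s) :
    (∑ j ∈ s, Function.update f k v j * n j) + f k * n k
      = (∑ j ∈ s, f j * n j) + v * n k := by
  have h1 := Finset.sum_erase_add s (fun j => Function.update f k v j * n j) hk
  have h2 := Finset.sum_erase_add s (fun j => f j * n j) hk
  have h3 : ∑ j ∈ s.erase k, Function.update f k v j * n j = ∑ j ∈ s.erase k, f j * n j :=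
    Finset.sum_congr rfl (fun j hj => by rw [Function.update_of_ne (Finset.ne_of_mem_erase hj)])
  simp only [Function.update_self] at h1
  beta_reduce at h2
  omega

theorem npos (p : ℕ) (a b n : ℕ → ℕ)
    (ha : ∀ i, 1 ≤ i → i ≤ p → 2 ≤ a i ∧ a i < b i)
    (hn : ∀ i, i ≤ p → n i = (∏ j ∈ Finset.Icc 1 i, b j) * ∏ j ∈ Finset.Icc (i+1) p, a j) :
    ∀ j, j ≤ p → 0 < n j := by
  intro j hj
  rw [hn j hj]
  apply Nat.mul_pos
  · apply Finset.prod_pos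
    intro k hk
    rw [Finset.mem_Icc] at hk
    have := ha k hk.1 (le_trans hk.2 hj)
    omega
  · apply Finset.prod_pos
    intro k hk
    rw [Finset.mem_Icc] at hk
    have := ha k (by omega) hk.2
    omega

theorem nrec (p : ℕ) (a b n : ℕ → ℕ)
    (ha : ∀ i, 1 ≤ i → i ≤ p → 2 ≤ a i ∧ a i < b i)
    (hn : ∀ i, i ≤ p → n i = (∏ j ∈ Finset.Icc 1 i, b j) * ∏ j ∈ Finset.Icc (i+1) p, a j) :
    ∀ i, i < p → n i * b (i+1) = n (i+1) * a (i+1) := by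
  intro i hip
  rw [hn i (by omega), hn (i+1) (by omega)]
  have h1 : Finset.Icc 1 (i+1) = Finset.Ioc 0 (i+1) := rfl
  have h2 : Finset.Icc 1 i = Finset.Ioc 0 i := rfl
  have h3 : Finset.Icc (i+1) p = Finset.Ioc i p := (Finset.Icc_add_one_left_eq_Ioc i p)
  have h4 : Finset.Icc (i+2) p = Finset.Ioc (i+1) p := (Finset.Icc_add_one_left_eq_Ioc (i+1) p)
  rw [h1, h2, h3, h4]
  rw [Finset.prod_Ioc_succ_top (Nat.zero_le _)]
  have h5 : (∏ j ∈ Finset.Ioc i (i+1), a j) * ∏ j ∈ Finset.Ioc (i+1) p, a j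
      = ∏ j ∈ Finset.Ioc i p, a j := Finset.prod_Ioc_consecutive _ (by omega) (by omega)
  rw [← h5, Nat.Ioc_succ_singleton, Finset.prod_singleton]
  ring

theorem trade (p : ℕ) (a b n : ℕ → ℕ)
    (ha : ∀ i, 1 ≤ i → i ≤ p → 2 ≤ a i ∧ a i < b i)
    (hab : ∀ i j, 1 ≤ j → j ≤ i → i ≤ p → Nat.gcd (a i) (b j) = 1)
    (hn : ∀ i, i ≤ p → n i = (∏ j ∈ Finset.Icc 1 i, b j) * ∏ j ∈ Finset.Icc (i+1) p, a j)
    (N : ℕ) (hbN : ∀ i, 1 ≤ i → i ≤ p → b i ≤ N)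
    (x y : ℕ → ℕ) (i : ℕ) (hip : i ≤ p)
    (hxy : ∑ j ∈ range (p+1), x j * n j = ∑ j ∈ range (p+1), y j * n j)
    (hlow : ∀ j, j < i → x j = y j)
    (hgt : y i < x i) :
    ∃ x' : ℕ → ℕ, (∑ j ∈ range (p+1), x' j * n j = ∑ j ∈ range (p+1), x j * n j)
      ∧ max (∑ j ∈ range (p+1), (x j - x' j)) (∑ j ∈ range (p+1), (x' j - x j)) ≤ N
      ∧ (∑ j ∈ range (p+1), ((x' j - y j) + (y j - x' j)))
          < ∑ j ∈ range (p+1), ((x j - y j) + (y j - x j)) := by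
  have npos' := npos p a b n ha hn
  -- reduced equation
  have hsplitx : ∑ j ∈ Ico 0 i, x j * n j + ∑ j ∈ Ico i (p+1), x j * n j
      = ∑ j ∈ range (p+1), x j * n j := by
    rw [Finset.range_eq_Ico]; exact Finset.sum_Ico_consecutive _ (Nat.zero_le i) (by omega)
  have hsplity : ∑ j ∈ Ico 0 i, y j * n j + ∑ j ∈ Ico i (p+1), y j * n j
      = ∑ j ∈ range (p+1), y j * n j := by
    rw [Finset.range_eq_Ico]; exact Finset.sum_Ico_consecutive _ (Nat.zero_le i) (by omega)
  have hlowsum : ∑ j ∈ Ico 0 i, x j * n j = ∑ j ∈ Ico 0 i, y j * n j :=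
    Finset.sum_congr rfl (fun j hj => by
      rw [hlow j (Finset.mem_Ico.mp hj).2])
  have hred : ∑ j ∈ Ico i (p+1), x j * n j = ∑ j ∈ Ico i (p+1), y j * n j := by omega
  -- i < p
  have hiltp : i < p := by
    by_contra hc
    have hi : i = p := by omega
    have h5 : Ico i (p+1) = {p} := by rw [hi, Finset.Ico_add_one_right_eq_Icc, Finset.Icc_self]
    rw [h5, Finset.sum_singleton, Finset.sum_singleton] at hred
    have h6 := Nat.eq_of_mul_eq_mul_right (npos' p le_rfl) hred
    rw [hi] at hgt
    omega
  -- factor out D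
  set D := ∏ k ∈ Ioc 0 i, b k with hD
  set g : ℕ → ℕ := fun j => (∏ k ∈ Ioc i j, b k) * ∏ k ∈ Finset.Icc (j+1) p, a k with hg
  have hfact : ∀ j, i ≤ j → j ≤ p → n j = D * g j := by
    intro j h1 h2
    rw [hn j h2, hg, hD]
    have he : Finset.Icc 1 j = Finset.Ioc 0 j := rfl
    rw [he, ← Finset.prod_Ioc_consecutive b (Nat.zero_le i) h1]
    ring
  have hDpos : 0 < D := by
    rw [hD]
    apply Finset.prod_pos
    intro k hk
    rw [Finset.mem_Ioc] at hk
    have := ha k (by omega) (by omega)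
    omega
  have hred2 : ∑ j ∈ Ico i (p+1), x j * g j = ∑ j ∈ Ico i (p+1), y j * g j := by
    have hx2 : ∑ j ∈ Ico i (p+1), x j * n j = D * ∑ j ∈ Ico i (p+1), x j * g j := by
      rw [Finset.mul_sum]
      refine Finset.sum_congr rfl (fun j hj => ?_)
      rw [Finset.mem_Ico] at hj
      rw [hfact j hj.1 (by omega)]; ring
    have hy2 : ∑ j ∈ Ico i (p+1), y j * n j = D * ∑ j ∈ Ico i (p+1), y j * g j := by
      rw [Finset.mul_sum]
      refine Finset.sum_congr rfl (fun j hj => ?_)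
      rw [Finset.mem_Ico] at hj
      rw [hfact j hj.1 (by omega)]; ring
    rw [hx2, hy2] at hred
    exact Nat.eq_of_mul_eq_mul_left hDpos hred
  set bb := b (i+1) with hbb
  set aa := a (i+1) with haa
  -- congruence mod bb at coordinate i
  have hsbx : ∑ j ∈ Ico i (p+1), x j * g j = x i * g i + ∑ j ∈ Ico (i+1) (p+1), x j * g j :=
    Finset.sum_eq_sum_Ico_succ_bot (by omega) _
  have hsby : ∑ j ∈ Ico i (p+1), y j * g j = y i * g i + ∑ j ∈ Ico (i+1) (p+1), y j * g j :=
    Finset.sum_eq_sum_Ico_succ_bot (by omega) _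
  have hdvd : ∀ z : ℕ → ℕ, bb ∣ ∑ j ∈ Ico (i+1) (p+1), z j * g j := by
    intro z
    refine Finset.dvd_sum (fun j hj => ?_)
    rw [Finset.mem_Ico] at hj
    have h1 : bb ∣ g j := by
      rw [hg]
      exact dvd_mul_of_dvd_left
        (Finset.dvd_prod_of_mem b (Finset.mem_Ioc.mpr ⟨by omega, by omega⟩)) _
    exact Dvd.dvd.mul_left h1 _
  obtain ⟨t1, ht1⟩ := hdvd x
  obtain ⟨t2, ht2⟩ := hdvd y
  have heq : x i * g i + bb * t1 = y i * g i + bb * t2 := by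
    rw [← ht1, ← ht2, ← hsbx, ← hsby]; exact hred2
  have hmod : x i * g i ≡ y i * g i [MOD bb] := by
    show (x i * g i) % bb = (y i * g i) % bb
    calc (x i * g i) % bb = (x i * g i + bb * t1) % bb := (Nat.add_mul_mod_self_left _ _ _).symm
      _ = (y i * g i + bb * t2) % bb := by rw [heq]
      _ = (y i * g i) % bb := Nat.add_mul_mod_self_left _ _ _
  have hcop : Nat.gcd bb (g i) = 1 := by
    have h0 : g i = ∏ k ∈ Finset.Icc (i+1) p, a k := by
      rw [hg]
      beta_reduce
      rw [Finset.Ioc_self, Finset.prod_empty, one_mul]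
    rw [h0]
    exact Nat.Coprime.prod_right (fun k hk => by
      rw [Finset.mem_Icc] at hk
      exact Nat.coprime_comm.mp (hab k (i+1) (by omega) (by omega) (by omega)))
  have hmodi : x i ≡ y i [MOD bb] := Nat.ModEq.cancel_right_of_coprime hcop hmod
  have hdvd2 : bb ∣ x i - y i := (Nat.modEq_iff_dvd' (le_of_lt hgt)).mp hmodi.symm
  have hble : bb ≤ x i - y i := Nat.le_of_dvd (by omega) hdvd2
  have hbxi : bb ≤ x i := by omega
  have hai1 := ha (i+1) (by omega) (by omega)
  -- construct x'
  set u1 := Function.update x i (x i - bb) with hu1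
  set x' := Function.update u1 (i+1) (x (i+1) + aa) with hx'
  have hx'i : x' i = x i - bb := by
    rw [hx', Function.update_of_ne (by omega), hu1, Function.update_self]
  have hx'i1 : x' (i+1) = x (i+1) + aa := by rw [hx', Function.update_self]
  have hx'j : ∀ j, j ≠ i → j ≠ i + 1 → x' j = x j := fun j h1 h2 => by
    rw [hx', Function.update_of_ne h2, hu1, Function.update_of_ne h1]
  have hsum : ∑ j ∈ range (p+1), x' j * n j = ∑ j ∈ range (p+1), x j * n j := by
    have E2 := sum_upd (range (p+1)) n x i (x i - bb) (Finset.mem_range.mpr (by omega))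
    have E1 := sum_upd (range (p+1)) n u1 (i+1) (x (i+1) + aa)
      (Finset.mem_range.mpr (by omega))
    rw [← hu1] at E2
    rw [← hx'] at E1
    have hu1i1 : u1 (i+1) = x (i+1) := by rw [hu1, Function.update_of_ne (by omega)]
    rw [hu1i1] at E1
    have hrec := nrec p a b n ha hn i hiltp
    have hsub : (x i - bb) * n i + bb * n i = x i * n i := by
      rw [← Nat.add_mul, Nat.sub_add_cancel hbxi]
    have hrec' : bb * n i = aa * n (i+1) := by
      rw [mul_comm bb, hbb, haa, hrec, mul_comm]
    have hexp : (x (i+1) + aa) * n (i+1) = x (i+1) * n (i+1) + aa * n (i+1) := Nat.add_mul _ _ _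
    rw [hexp] at E1
    omega
  refine ⟨x', hsum, ?_, ?_⟩
  · -- distance bound
    have hd1 : ∑ j ∈ range (p+1), (x j - x' j) = bb := by
      have h0 : ∀ j ∈ range (p+1), j ≠ i → x j - x' j = 0 := by
        intro j _ hne
        rcases eq_or_ne j (i+1) with h | h
        · subst h; rw [hx'i1]; omega
        · rw [hx'j j hne h]; omega
      have := Finset.sum_eq_single_of_mem i (Finset.mem_range.mpr (by omega)) h0
      rw [this, hx'i]; omega
    have hd2 : ∑ j ∈ range (p+1), (x' j - x j) = aa := by
      have h0 : ∀ j ∈ range (p+1), j ≠ i + 1 → x' j - x j = 0 := by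
        intro j _ hne
        rcases eq_or_ne j i with h | h
        · subst h; rw [hx'i]; omega
        · rw [hx'j j h hne]; omega
      have := Finset.sum_eq_single_of_mem (i+1) (Finset.mem_range.mpr (by omega)) h0
      rw [this, hx'i1]; omega
    rw [hd1, hd2]
    have hbN' := hbN (i+1) (by omega) (by omega)
    exact max_le hbN' (le_trans (le_of_lt hai1.2) hbN')
  · -- measure decrease
    have hmemi : i ∈ range (p+1) := Finset.mem_range.mpr (by omega)
    have hmemi1 : i + 1 ∈ (range (p+1)).erase i :=
      Finset.mem_erase.mpr ⟨by omega, Finset.mem_range.mpr (by omega)⟩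
    have A1 := Finset.sum_erase_add ((range (p+1)).erase i)
      (fun j => (x' j - y j) + (y j - x' j)) hmemi1
    have A2 := Finset.sum_erase_add (range (p+1))
      (fun j => (x' j - y j) + (y j - x' j)) hmemi
    have B1 := Finset.sum_erase_add ((range (p+1)).erase i)
      (fun j => (x j - y j) + (y j - x j)) hmemi1
    have B2 := Finset.sum_erase_add (range (p+1))
      (fun j => (x j - y j) + (y j - x j)) hmemi
    beta_reduce at A1 A2 B1 B2
    have hcong : ∑ j ∈ ((range (p+1)).erase i).erase (i+1), ((x' j - y j) + (y j - x' j))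
        = ∑ j ∈ ((range (p+1)).erase i).erase (i+1), ((x j - y j) + (y j - x j)) :=
      Finset.sum_congr rfl (fun j hj => by
        have h2 := Finset.ne_of_mem_erase hj
        have h1 := Finset.ne_of_mem_erase (Finset.mem_of_mem_erase hj)
        rw [hx'j j h1 h2])
    rw [hx'i1] at A1
    rw [hx'i] at A2
    omega

theorem chain (p : ℕ) (a b n : ℕ → ℕ)
    (ha : ∀ i, 1 ≤ i → i ≤ p → 2 ≤ a i ∧ a i < b i)
    (hab : ∀ i j, 1 ≤ j → j ≤ i → i ≤ p → Nat.gcd (a i) (b j) = 1)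
    (hn : ∀ i, i ≤ p → n i = (∏ j ∈ Finset.Icc 1 i, b j) * ∏ j ∈ Finset.Icc (i+1) p, a j)
    (N : ℕ) (hbN : ∀ i, 1 ≤ i → i ≤ p → b i ≤ N) :
    ∀ M x y, (∑ j ∈ range (p+1), ((x j - y j) + (y j - x j))) ≤ M →
    ∑ j ∈ range (p+1), x j * n j = ∑ j ∈ range (p+1), y j * n j →
    Relation.ReflTransGen (fun u v : ℕ → ℕ =>
      (∑ j ∈ range (p+1), u j * n j = ∑ j ∈ range (p+1), v j * n j) ∧
      max (∑ j ∈ range (p+1), (u j - v j)) (∑ j ∈ range (p+1), (v j - u j)) ≤ N) x y := by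
  intro M
  induction M with
  | zero =>
    intro x y hM hxy
    have hz : ∀ j ∈ range (p+1), x j - y j = 0 ∧ y j - x j = 0 := by
      intro j hj
      have := Finset.sum_eq_zero_iff.mp (Nat.le_zero.mp hM) j hj
      omega
    refine Relation.ReflTransGen.single ⟨hxy, ?_⟩
    have h1 : ∑ j ∈ range (p+1), (x j - y j) = 0 :=
      Finset.sum_eq_zero (fun j hj => (hz j hj).1)
    have h2 : ∑ j ∈ range (p+1), (y j - x j) = 0 :=
      Finset.sum_eq_zero (fun j hj => (hz j hj).2)
    rw [h1, h2]; omega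
  | succ M ih =>
    intro x y hM hxy
    by_cases hEq : ∀ j ∈ range (p+1), x j = y j
    · refine Relation.ReflTransGen.single ⟨hxy, ?_⟩
      have h1 : ∑ j ∈ range (p+1), (x j - y j) = 0 :=
        Finset.sum_eq_zero (fun j hj => by rw [hEq j hj]; omega)
      have h2 : ∑ j ∈ range (p+1), (y j - x j) = 0 :=
        Finset.sum_eq_zero (fun j hj => by rw [hEq j hj]; omega)
      rw [h1, h2]; omega
    · push_neg at hEq
      obtain ⟨j0, hj0, hj0ne⟩ := hEq
      set s := (range (p+1)).filter (fun j => x j ≠ y j) with hs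
      have hsne : s.Nonempty := ⟨j0, Finset.mem_filter.mpr ⟨hj0, hj0ne⟩⟩
      set i := s.min' hsne with hi
      have hmem : i ∈ s := Finset.min'_mem s hsne
      have himem := Finset.mem_filter.mp hmem
      have hine : x i ≠ y i := himem.2
      have hile : i ≤ p := by
        have := Finset.mem_range.mp himem.1
        omega
      have hlow : ∀ j, j < i → x j = y j := by
        intro j hj
        by_contra hc
        have hjp : j < p + 1 := by omega
        have : j ∈ s := Finset.mem_filter.mpr ⟨Finset.mem_range.mpr hjp, hc⟩
        have := Finset.min'_le s j this
        omega
      have hmsym : ∀ u v : ℕ → ℕ, ∑ j ∈ range (p+1), ((u j - v j) + (v j - u j))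
          = ∑ j ∈ range (p+1), ((v j - u j) + (u j - v j)) :=
        fun u v => Finset.sum_congr rfl (fun j _ => by omega)
      rcases Nat.lt_or_ge (y i) (x i) with hgt | hge
      · obtain ⟨x', hs', hdist, hmeas⟩ :=
          trade p a b n ha hab hn N hbN x y i hile hxy hlow hgt
        refine Relation.ReflTransGen.head ⟨hs'.symm, hdist⟩ ?_
        exact ih x' y (by omega) (hs'.trans hxy)
      · have hgt' : x i < y i := by omega
        obtain ⟨y', hs', hdist, hmeas⟩ :=
          trade p a b n ha hab hn N hbN y x i hile hxy.symm
            (fun j hj => (hlow j hj).symm) hgt'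
        have hm2 : ∑ j ∈ range (p+1), ((x j - y' j) + (y' j - x j)) ≤ M := by
          rw [hmsym x y']
          have := hmsym x y
          omega
        refine Relation.ReflTransGen.tail (ih x y' hm2 (hxy.trans hs'.symm)) ?_
        exact ⟨hs', by rw [max_comm] at hdist; exact hdist⟩

theorem nmono (p : ℕ) (a b n : ℕ → ℕ)
    (ha : ∀ i, 1 ≤ i → i ≤ p → 2 ≤ a i ∧ a i < b i)
    (hn : ∀ i, i ≤ p → n i = (∏ j ∈ Finset.Icc 1 i, b j) * ∏ j ∈ Finset.Icc (i+1) p, a j) :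
    ∀ j k, j ≤ k → k ≤ p → n j ≤ n k := by
  have step : ∀ i, i < p → n i ≤ n (i+1) := by
    intro i hip
    have hr := nrec p a b n ha hn i hip
    have h2 := ha (i+1) (by omega) (by omega)
    have hpos := npos p a b n ha hn i (by omega)
    nlinarith
  intro j k hjk hkp
  induction k with
  | zero =>
    have : j = 0 := by omega
    rw [this]
  | succ m ih =>
    rcases Nat.lt_or_ge j (m+1) with h | h
    · exact le_trans (ih (by omega) (by omega)) (step m (by omega))
    · have : j = m + 1 := by omega
      rw [this]

theorem dichotomy (p : ℕ) (a b n : ℕ → ℕ)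
    (ha : ∀ i, 1 ≤ i → i ≤ p → 2 ≤ a i ∧ a i < b i)
    (hab : ∀ i j, 1 ≤ j → j ≤ i → i ≤ p → Nat.gcd (a i) (b j) = 1)
    (hn : ∀ i, i ≤ p → n i = (∏ j ∈ Finset.Icc 1 i, b j) * ∏ j ∈ Finset.Icc (i+1) p, a j)
    (i : ℕ) (hi1 : 1 ≤ i) (hip : i ≤ p)
    (z : ℕ → ℕ) (hz : ∑ j ∈ range (p+1), z j * n j = b i * n (i-1)) :
    (∀ j, i ≤ j → j ≤ p → z j = 0) ∨ (∀ j, j < i → z j = 0) := by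
  have npos' := npos p a b n ha hn
  obtain ⟨i', rfl⟩ : ∃ i', i = i' + 1 := ⟨i - 1, by omega⟩
  simp only [Nat.add_sub_cancel] at hz
  set A := ∏ k ∈ Ioc i' p, a k with hA
  set D := ∏ k ∈ Ioc 0 (i'+1), b k with hD
  have hm : b (i'+1) * n i' = D * A := by
    rw [hn i' (by omega)]
    have h1 : Finset.Icc 1 i' = Finset.Ioc 0 i' := rfl
    have h2 : Finset.Icc (i'+1) p = Finset.Ioc i' p := Finset.Icc_add_one_left_eq_Ioc i' p
    rw [h1, h2, hD, Finset.prod_Ioc_succ_top (Nat.zero_le _), hA]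
    ring
  have hApos : 0 < A := by
    rw [hA]; apply Finset.prod_pos; intro k hk
    rw [Finset.mem_Ioc] at hk
    have := ha k (by omega) (by omega); omega
  have hDpos : 0 < D := by
    rw [hD]; apply Finset.prod_pos; intro k hk
    rw [Finset.mem_Ioc] at hk
    have := ha k (by omega) (by omega); omega
  have hsplit : ∑ j ∈ Ico 0 (i'+1), z j * n j + ∑ j ∈ Ico (i'+1) (p+1), z j * n j
      = ∑ j ∈ range (p+1), z j * n j := by
    rw [Finset.range_eq_Ico]; exact Finset.sum_Ico_consecutive _ (Nat.zero_le _) (by omega)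
  have hAL : A ∣ ∑ j ∈ Ico 0 (i'+1), z j * n j := by
    refine Finset.dvd_sum (fun j hj => ?_)
    rw [Finset.mem_Ico] at hj
    have hAn : A ∣ n j := by
      rw [hn j (by omega), hA]
      have h2 : Finset.Icc (j+1) p = Finset.Ioc j p := Finset.Icc_add_one_left_eq_Ioc j p
      rw [h2]
      exact Dvd.dvd.mul_left
        (Finset.prod_dvd_prod_of_subset _ _ a (Finset.Ioc_subset_Ioc_left (by omega))) _
    exact Dvd.dvd.mul_left hAn _
  have hDH : D ∣ ∑ j ∈ Ico (i'+1) (p+1), z j * n j := by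
    refine Finset.dvd_sum (fun j hj => ?_)
    rw [Finset.mem_Ico] at hj
    have hDn : D ∣ n j := by
      rw [hn j (by omega), hD]
      have h1 : Finset.Icc 1 j = Finset.Ioc 0 j := rfl
      rw [h1]
      exact dvd_mul_of_dvd_left
        (Finset.prod_dvd_prod_of_subset _ _ b (Finset.Ioc_subset_Ioc_right (by omega))) _
    exact Dvd.dvd.mul_left hDn _
  have hcop : Nat.Coprime D A := by
    rw [hD, hA]
    refine Nat.Coprime.prod_left (fun k hk => ?_)
    refine Nat.Coprime.prod_right (fun l hl => ?_)
    rw [Finset.mem_Ioc] at hk hl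
    exact Nat.coprime_comm.mp (hab l k (by omega) (by omega) (by omega))
  have hAH : A ∣ ∑ j ∈ Ico (i'+1) (p+1), z j * n j := by
    have hH : ∑ j ∈ Ico (i'+1) (p+1), z j * n j = D * A - ∑ j ∈ Ico 0 (i'+1), z j * n j := by
      omega
    rw [hH]
    exact Nat.dvd_sub (dvd_mul_left A D) hAL
  have hDAH : D * A ∣ ∑ j ∈ Ico (i'+1) (p+1), z j * n j :=
    hcop.mul_dvd_of_dvd_of_dvd hDH hAH
  rcases Nat.eq_zero_or_pos (∑ j ∈ Ico (i'+1) (p+1), z j * n j) with hH0 | hHpos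
  · left
    intro j hij hjp
    have := Finset.sum_eq_zero_iff.mp hH0 j (Finset.mem_Ico.mpr ⟨by omega, by omega⟩)
    have hnp := npos' j hjp
    -- z j * n j = 0, n j > 0
    have : z j * n j = 0 := this
    exact by
      rcases Nat.mul_eq_zero.mp this with h | h
      · exact h
      · omega
  · right
    have hge := Nat.le_of_dvd hHpos hDAH
    have hL0 : ∑ j ∈ Ico 0 (i'+1), z j * n j = 0 := by omega
    intro j hj
    have := Finset.sum_eq_zero_iff.mp hL0 j (Finset.mem_Ico.mpr ⟨by omega, by omega⟩)
    have : z j * n j = 0 := this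
    have hnp := npos' j (by omega)
    rcases Nat.mul_eq_zero.mp this with h | h
    · exact h
    · omega

theorem crossing (p : ℕ) (a b n : ℕ → ℕ)
    (ha : ∀ i, 1 ≤ i → i ≤ p → 2 ≤ a i ∧ a i < b i)
    (hab : ∀ i j, 1 ≤ j → j ≤ i → i ≤ p → Nat.gcd (a i) (b j) = 1)
    (hn : ∀ i, i ≤ p → n i = (∏ j ∈ Finset.Icc 1 i, b j) * ∏ j ∈ Finset.Icc (i+1) p, a j)
    (i : ℕ) (hi1 : 1 ≤ i) (hip : i ≤ p) (N : ℕ) :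
    ∀ u : ℕ → ℕ, Relation.ReflTransGen (fun u v : ℕ → ℕ =>
        (∑ j ∈ range (p+1), u j * n j = ∑ j ∈ range (p+1), v j * n j) ∧
        max (∑ j ∈ range (p+1), (u j - v j)) (∑ j ∈ range (p+1), (v j - u j)) ≤ N)
        u (fun j => if j = i then a i else 0) →
      (∀ j, i ≤ j → j ≤ p → u j = 0) →
      (∑ j ∈ range (p+1), u j * n j = b i * n (i-1)) → b i ≤ N := by
  have npos' := npos p a b n ha hn
  intro u hRTG
  induction hRTG using Relation.ReflTransGen.head_induction_on with
  | refl =>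
    intro hlo _
    exfalso
    have h1 := hlo i le_rfl hip
    simp at h1
    have h2 := ha i hi1 hip
    omega
  | @head w c h' htail ih =>
    intro hlo hsum
    have hsumc : ∑ j ∈ range (p+1), c j * n j = b i * n (i-1) := h'.1.symm.trans hsum
    rcases dichotomy p a b n ha hab hn i hi1 hip c hsumc with hcl | hch
    · exact ih hcl hsumc
    · -- c is "high": c j = 0 for j < i ; w is "low": cost of this step ≥ b i
      have hwsum : ∑ j ∈ range i, w j * n j = b i * n (i-1) := by
        have hsplit : ∑ j ∈ Ico 0 i, w j * n j + ∑ j ∈ Ico i (p+1), w j * n j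
            = ∑ j ∈ range (p+1), w j * n j := by
          rw [Finset.range_eq_Ico]
          exact Finset.sum_Ico_consecutive _ (Nat.zero_le _) (by omega)
        have hhi0 : ∑ j ∈ Ico i (p+1), w j * n j = 0 :=
          Finset.sum_eq_zero (fun j hj => by
            rw [Finset.mem_Ico] at hj
            rw [hlo j hj.1 (by omega)]
            ring)
        rw [Finset.range_eq_Ico]
        omega
      have hle : ∑ j ∈ range i, w j * n j ≤ (∑ j ∈ range i, w j) * n (i-1) := by
        rw [Finset.sum_mul]
        refine Finset.sum_le_sum (fun j hj => ?_)
        rw [Finset.mem_range] at hj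
        exact Nat.mul_le_mul_left _ (nmono p a b n ha hn j (i-1) (by omega) (by omega))
      have hbi : b i ≤ ∑ j ∈ range i, w j := by
        have h1 : b i * n (i-1) ≤ (∑ j ∈ range i, w j) * n (i-1) := by omega
        exact Nat.le_of_mul_le_mul_right h1 (npos' (i-1) (by omega))
      have h3 : ∑ j ∈ range i, (w j - c j) = ∑ j ∈ range i, w j :=
        Finset.sum_congr rfl (fun j hj => by
          rw [Finset.mem_range] at hj
          rw [hch j hj]
          omega)
      have h2 : ∑ j ∈ range i, (w j - c j) ≤ ∑ j ∈ range (p+1), (w j - c j) :=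
        Finset.sum_le_sum_of_subset (by
          intro t ht
          rw [Finset.mem_range] at *
          omega)
      have := h'.2
      omega



theorem stmt19 (p : ℕ) (hp : 1 ≤ p) (a b : ℕ → ℕ)
    (ha : ∀ i, 1 ≤ i → i ≤ p → 2 ≤ a i ∧ a i < b i)
    (hab : ∀ i j, 1 ≤ j → j ≤ i → i ≤ p → Nat.gcd (a i) (b j) = 1)
    (n : ℕ → ℕ)
    (hn : ∀ i, i ≤ p → n i = (∏ j ∈ Finset.Icc 1 i, b j) * ∏ j ∈ Finset.Icc (i+1) p, a j) :
    IsLeast {N : ℕ | ∀ x y : ℕ → ℕ,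
        ∑ j ∈ Finset.range (p+1), x j * n j = ∑ j ∈ Finset.range (p+1), y j * n j →
        Relation.ReflTransGen (fun u v : ℕ → ℕ =>
          (∑ j ∈ Finset.range (p+1), u j * n j = ∑ j ∈ Finset.range (p+1), v j * n j) ∧
          max (∑ j ∈ Finset.range (p+1), (u j - v j))
              (∑ j ∈ Finset.range (p+1), (v j - u j)) ≤ N) x y}
      ((Finset.Icc 1 p).sup b) := by
  constructor
  · intro x y hxy
    exact chain p a b n ha hab hn _
      (fun i h1 h2 => Finset.le_sup (Finset.mem_Icc.mpr ⟨h1, h2⟩))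
      _ x y le_rfl hxy
  · intro N hN
    simp only [Set.mem_setOf_eq] at hN
    refine Finset.sup_le (fun i hi => ?_)
    rw [Finset.mem_Icc] at hi
    obtain ⟨hi1, hip⟩ := hi
    have hxsum : ∑ j ∈ Finset.range (p+1), (if j = i-1 then b i else 0) * n j
        = b i * n (i-1) := by
      have h0 : ∀ j ∈ Finset.range (p+1), j ≠ i-1 → (if j = i-1 then b i else 0) * n j = 0 :=
        fun j _ hne => by rw [if_neg hne]; ring
      rw [Finset.sum_eq_single_of_mem (i-1) (Finset.mem_range.mpr (by omega)) h0, if_pos rfl]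
    have hysum : ∑ j ∈ Finset.range (p+1), (if j = i then a i else 0) * n j
        = a i * n i := by
      have h0 : ∀ j ∈ Finset.range (p+1), j ≠ i → (if j = i then a i else 0) * n j = 0 :=
        fun j _ hne => by rw [if_neg hne]; ring
      rw [Finset.sum_eq_single_of_mem i (Finset.mem_range.mpr (by omega)) h0, if_pos rfl]
    have heq : b i * n (i-1) = a i * n i := by
      have hrec := nrec p a b n ha hn (i-1) (by omega)
      have hii : i - 1 + 1 = i := by omega
      rw [hii] at hrec
      rw [mul_comm, hrec, mul_comm]
    have hRTG := hN (fun j => if j = i-1 then b i else 0) (fun j => if j = i then a i else 0)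
      (by beta_reduce; rw [hxsum, hysum, heq])
    refine crossing p a b n ha hab hn i hi1 hip N
      (fun j => if j = i-1 then b i else 0) hRTG
      (fun j hij hjp => by beta_reduce; rw [if_neg (by omega)])
      (by beta_reduce; rw [hxsum])
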